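/- Let T_4 be the quantum torus on generators Z_{ij}, 1 ≤ i < j ≤ 4, associated to the quiver Q_4, and let E be the quantum exponential. Then the ten-term cyclic identity holds: E(Z12)E(Z12Z23)E(Z12Z23Z34)E(Z13)E(Z13Z24)E(Z14)E(Z23)E(Z23Z34)E(Z24)E(Z34) = E(Z14)E(Z14Z13)E(Z14Z13Z12)E(Z24)E(Z24Z23)E(Z34)E(Z13)E(Z13Z12)E(Z23)E(Z12), the right-hand side being the image of the left under the rotation automorphism ρ(Z_{ij}) = Z_{j−i,5−i}. -/

import Mathlib

/-- Coefficients of the quantum exponential series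
`E(x) = ∑ (-x)^n / ((1-q)⋯(1-q^n))` with `q = RatFunc.X`. -/
noncomputable def qcoef (n : ℕ) : RatFunc ℚ :=
  (-1 : RatFunc ℚ) ^ n / ∏ k ∈ Finset.range n, (1 - (RatFunc.X : RatFunc ℚ) ^ (k + 1))

/-- The quantum exponential of an element of a topological algebra over `ℚ(q)`. -/
noncomputable def qexp {A : Type*} [Ring A] [Algebra (RatFunc ℚ) A] [TopologicalSpace A]
    (x : A) : A :=
  ∑' n : ℕ, qcoef n • x ^ n

/-- Entry `B_{v,w}` of the skew-symmetric incidence matrix of the triangular quiver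
`Q_N`: edges go `(i,j)→(i,j+1)`, `(i,j)→(i+1,j)` and `(i+1,j+1)→(i,j)`. -/
def Bfun (v w : ℕ × ℕ) : ℤ :=
  if (w = (v.1, v.2 + 1) ∨ w = (v.1 + 1, v.2) ∨ v = (w.1 + 1, w.2 + 1)) then 1
  else if (v = (w.1, w.2 + 1) ∨ v = (w.1 + 1, w.2) ∨ w = (v.1 + 1, v.2 + 1)) then -1
  else 0

/-- The vertex set of the quiver `Q_N`: pairs `(i,j)` with `1 ≤ i < j ≤ N`. -/
def vertexSet (N : ℕ) : Finset (ℕ × ℕ) :=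
  (Finset.Icc 1 N ×ˢ Finset.Icc 1 N).filter fun p => p.1 < p.2

/-!
The quantum exponential of a nilpotent element is a finite sum, so everything reduces to
algebra. The recursion `qcoef (n+1) (1 - q^(n+1)) = -qcoef n` gives the `q`-difference equation
`E(q y) = (1 + y) E(y)`, hence `E(y) x = (x + x y) E(y)` whenever `y x = q x y`; together with the
`q`-binomial addition formula `E(a + b) = E(a) E(b)` for `b a = q a b` this is the pentagon
identity `E(y) E(x) = E(x) E(x y) E(y)`. Three moves (a commutation and two pentagons) turn the
pentagon into the four-term identity `E(a) E(a c) E(b) E(c) = E(b) E(b a) E(c) E(a)` for monomials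
forming an oriented 3-cycle `a → b → c → a`. Five such moves, interleaved with commutations of
`q`-commuting monomials, carry the left-hand side of the ten-term identity to the right-hand side;
each of them is checked by evaluating a decision procedure on words of monomials.
-/

open Finset

local notation "q" => (RatFunc.X : RatFunc ℚ)

theorem exists_pow_eq_zero_of_isNilpotent {M : Type*} [MonoidWithZero M] {a b : M}
    (ha : IsNilpotent a) (hb : IsNilpotent b) : ∃ N, a ^ N = 0 ∧ b ^ N = 0 := by
  obtain ⟨m, hm⟩ := ha
  obtain ⟨n, hn⟩ := hb
  exact ⟨m + n, pow_eq_zero_of_le (by omega) hm, pow_eq_zero_of_le (by omega) hn⟩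

theorem Finset.sum_range_sum_antidiagonal_eq_sum_product {M : Type*} [AddCommMonoid M] {N : ℕ}
    (f : ℕ × ℕ → M) (hf : ∀ p : ℕ × ℕ, N ≤ p.1 ∨ N ≤ p.2 → f p = 0) :
    ∑ n ∈ range (N + N), ∑ p ∈ antidiagonal n, f p = ∑ p ∈ range N ×ˢ range N, f p := by
  have upper_half_vanishes : ∑ i ∈ range N, ∑ j ∈ range (N + N - (N + i)), f (N + i, j) = 0 :=
    sum_eq_zero fun i _ => sum_eq_zero fun j _ => hf _ (by simp)
  simp only [Nat.sum_antidiagonal_eq_sum_range_succ_mk, Nat.succ_eq_add_one]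
  rw [sum_range_diag_flip _ fun i j => f (i, j), sum_range_add, upper_half_vanishes, add_zero,
    sum_product]
  refine sum_congr rfl fun i hi => (sum_subset (by grind) fun j _ hj => ?_).symm
  exact hf _ (by grind)

theorem one_sub_X_pow_succ_ne_zero (n : ℕ) : 1 - q ^ (n + 1) ≠ 0 := by
  rw [← RatFunc.algebraMap_X, ← map_pow, ← map_one (algebraMap (Polynomial ℚ) (RatFunc ℚ)),
    ← map_sub, map_ne_zero_iff _ (RatFunc.algebraMap_injective ℚ), ← neg_ne_zero, neg_sub,
    ← Polynomial.C_1]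
  exact Polynomial.X_pow_sub_C_ne_zero n.succ_pos 1

theorem qcoef_ne_zero (n : ℕ) : qcoef n ≠ 0 :=
  div_ne_zero (pow_ne_zero _ (by norm_num)) <|
    prod_ne_zero_iff.mpr fun k _ => one_sub_X_pow_succ_ne_zero k

theorem qcoef_succ_mul (n : ℕ) : qcoef (n + 1) * (1 - q ^ (n + 1)) = -qcoef n := by
  have := one_sub_X_pow_succ_ne_zero n
  rw [qcoef, qcoef, prod_range_succ]
  field_simp
  rw [pow_succ]
  ring

section Algebra

variable {A : Type*} [Ring A] [Algebra (RatFunc ℚ) A]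

theorem pow_mul_eq_smul_of_mul_eq_smul {x y : A} {c : RatFunc ℚ} (h : y * x = c • (x * y))
    (n : ℕ) : y ^ n * x = c ^ n • (x * y ^ n) := by
  induction n with
  | zero => simp
  | succ n ih =>
    rw [pow_succ, mul_assoc, h, mul_smul_comm, ← mul_assoc, ih, smul_mul_assoc, smul_smul,
      mul_assoc, ← pow_succ, ← pow_succ']

theorem isNilpotent_mul_of_mul_eq_smul {x y : A} {c : RatFunc ℚ} (h : y * x = c • (x * y))
    (hx : IsNilpotent x) : IsNilpotent (x * y) := by
  obtain ⟨N, hN⟩ := hx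
  have normal_order : ∀ n, ∃ e : RatFunc ℚ, (x * y) ^ n = e • (x ^ n * y ^ n) := by
    intro n
    induction n with
    | zero => exact ⟨1, by simp⟩
    | succ n ih =>
      obtain ⟨e, he⟩ := ih
      refine ⟨e * c ^ n, ?_⟩
      rw [pow_succ, he, smul_mul_assoc, mul_assoc, ← mul_assoc (y ^ n),
        pow_mul_eq_smul_of_mul_eq_smul h, smul_mul_assoc, mul_smul_comm, smul_smul, mul_assoc x,
        ← pow_succ, ← mul_assoc, ← pow_succ]
  obtain ⟨e, he⟩ := normal_order N
  exact ⟨N, by rw [he, hN, zero_mul, smul_zero]⟩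

theorem qcoef_sum_antidiagonal_mul_add {a b : A} (h : b * a = q • (a * b)) (n : ℕ) :
    (∑ p ∈ antidiagonal n, (qcoef p.1 • a ^ p.1) * (qcoef p.2 • b ^ p.2)) * (a + b) =
      -(1 - q ^ (n + 1)) •
        ∑ p ∈ antidiagonal (n + 1), (qcoef p.1 • a ^ p.1) * (qcoef p.2 • b ^ p.2) := by
  -- `-(1 - q^(k+l)) = -(1 - q^k) q^l - (1 - q^l)`; `qcoef_succ_mul` absorbs each part
  have split : ∀ p ∈ antidiagonal (n + 1),
      -(1 - q ^ (n + 1)) • ((qcoef p.1 • a ^ p.1) * (qcoef p.2 • b ^ p.2)) =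
        (-(1 - q ^ p.1) * q ^ p.2) • ((qcoef p.1 • a ^ p.1) * (qcoef p.2 • b ^ p.2)) +
        (-(1 - q ^ p.2)) • ((qcoef p.1 • a ^ p.1) * (qcoef p.2 • b ^ p.2)) := by
    intro p hp
    rw [← HasAntidiagonal.mem_antidiagonal.mp hp, ← add_smul, pow_add]
    ring_nf
  rw [smul_sum, sum_congr rfl split, sum_add_distrib, Nat.sum_antidiagonal_succ,
    Nat.sum_antidiagonal_succ', mul_add, sum_mul, sum_mul]
  simp only [pow_zero, sub_self, neg_zero, zero_mul, zero_smul, zero_add]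
  congr 1 <;> refine sum_congr rfl fun p _ => ?_
  · simp only [smul_mul_assoc, mul_smul_comm, smul_smul, mul_assoc,
      pow_mul_eq_smul_of_mul_eq_smul h]
    rw [← mul_assoc (a ^ p.1), ← pow_succ]
    congr 1
    linear_combination (q ^ p.2 * qcoef p.2) * qcoef_succ_mul p.1
  · simp only [smul_mul_assoc, mul_smul_comm, smul_smul, mul_assoc, ← pow_succ]
    congr 1
    linear_combination qcoef p.1 * qcoef_succ_mul p.2

theorem qcoef_smul_add_pow {a b : A} (h : b * a = q • (a * b)) (n : ℕ) :
    qcoef n • (a + b) ^ n =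
      ∑ p ∈ antidiagonal n, (qcoef p.1 • a ^ p.1) * (qcoef p.2 • b ^ p.2) := by
  induction n with
  | zero => simp [qcoef]
  | succ n ih =>
    refine smul_right_injective A (neg_ne_zero.mpr (one_sub_X_pow_succ_ne_zero n)) ?_
    dsimp only
    rw [← qcoef_sum_antidiagonal_mul_add h, ← ih, smul_smul, mul_comm, mul_neg, qcoef_succ_mul,
      neg_neg, pow_succ, smul_mul_assoc]

theorem add_pow_eq_zero_of_mul_eq_X_smul {a b : A} {N : ℕ} (ha : a ^ N = 0) (hb : b ^ N = 0)
    (h : b * a = q • (a * b)) : (a + b) ^ (N + N) = 0 := by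
  refine (smul_eq_zero.mp ?_).resolve_left (qcoef_ne_zero (N + N))
  rw [qcoef_smul_add_pow h]
  refine sum_eq_zero fun p hp => ?_
  obtain hp | hp : N ≤ p.1 ∨ N ≤ p.2 := by have := HasAntidiagonal.mem_antidiagonal.mp hp; omega
  · rw [pow_eq_zero_of_le hp ha, smul_zero, zero_mul]
  · rw [pow_eq_zero_of_le hp hb, smul_zero, mul_zero]

variable [TopologicalSpace A]

theorem qexp_eq_sum_range {x : A} {N : ℕ} (hx : x ^ N = 0) :
    qexp x = ∑ n ∈ range N, qcoef n • x ^ n :=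
  tsum_eq_sum fun n hn => by rw [pow_eq_zero_of_le (by simpa using hn) hx, smul_zero]

theorem qexp_X_smul {y : A} (hy : IsNilpotent y) : qexp (q • y) = (1 + y) * qexp y := by
  obtain ⟨N, hN⟩ := hy
  have hN' : y ^ (N + 1) = 0 := pow_eq_zero_of_le N.le_succ hN
  rw [qexp_eq_sum_range (by rw [smul_pow, hN', smul_zero]), qexp_eq_sum_range hN', add_mul,
    one_mul, mul_sum, sum_range_succ' _ N, sum_range_succ' _ N, sum_range_succ _ N]
  simp only [smul_pow, smul_smul, mul_smul_comm, ← pow_succ', hN', smul_zero, add_zero, pow_zero]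
  rw [add_right_comm, ← sum_add_distrib]
  congr 1
  refine sum_congr rfl fun n _ => ?_
  rw [← add_smul]
  congr 1
  linear_combination -qcoef_succ_mul n

theorem semiconjBy_qexp {x y : A} (hy : IsNilpotent y) (h : y * x = q • (x * y)) :
    SemiconjBy (qexp y) x (x + x * y) := by
  obtain ⟨N, hN⟩ := hy
  have hqN : (q • y) ^ N = 0 := by rw [smul_pow, hN, smul_zero]
  have : qexp y * x = x * qexp (q • y) := by
    rw [qexp_eq_sum_range hN, qexp_eq_sum_range hqN, sum_mul, mul_sum]
    refine sum_congr rfl fun n _ => ?_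
    simp only [smul_mul_assoc, pow_mul_eq_smul_of_mul_eq_smul h, smul_pow, mul_smul_comm,
      smul_smul]
  rw [SemiconjBy, this, qexp_X_smul ⟨N, hN⟩, ← mul_assoc, mul_add, mul_one]

theorem qexp_add {a b : A} (ha : IsNilpotent a) (hb : IsNilpotent b) (h : b * a = q • (a * b)) :
    qexp (a + b) = qexp a * qexp b := by
  obtain ⟨N, haN, hbN⟩ := exists_pow_eq_zero_of_isNilpotent ha hb
  have vanish : ∀ p : ℕ × ℕ, N ≤ p.1 ∨ N ≤ p.2 →
      (qcoef p.1 • a ^ p.1) * (qcoef p.2 • b ^ p.2) = 0 := by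
    rintro p (hp | hp) <;> simp [pow_eq_zero_of_le hp, haN, hbN]
  rw [qexp_eq_sum_range (add_pow_eq_zero_of_mul_eq_X_smul haN hbN h), qexp_eq_sum_range haN,
    qexp_eq_sum_range hbN, sum_mul_sum, ← sum_product',
    ← sum_range_sum_antidiagonal_eq_sum_product _ vanish]
  exact sum_congr rfl fun n _ => qcoef_smul_add_pow h n

theorem Commute.qexp {x y : A} (hxy : Commute x y) (hx : IsNilpotent x) (hy : IsNilpotent y) :
    Commute (qexp x) (qexp y) := by
  obtain ⟨N, hxN, hyN⟩ := exists_pow_eq_zero_of_isNilpotent hx hy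
  rw [qexp_eq_sum_range hxN, qexp_eq_sum_range hyN]
  exact .sum_left _ _ _ fun i _ => .sum_right _ _ _ fun j _ =>
    ((hxy.pow_pow i j).smul_left _).smul_right _

theorem semiconjBy_qexp_qexp {x y : A} (hx : IsNilpotent x) (hy : IsNilpotent y)
    (h : y * x = q • (x * y)) : SemiconjBy (qexp y) (qexp x) (qexp (x + x * y)) := by
  obtain ⟨N, hxN, hxyN⟩ :=
    exists_pow_eq_zero_of_isNilpotent hx (isNilpotent_mul_of_mul_eq_smul h hx)
  have hxxy : x * y * x = q • (x * (x * y)) := by rw [mul_assoc, h, mul_smul_comm]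
  rw [SemiconjBy, qexp_eq_sum_range (pow_eq_zero_of_le (by omega) hxN : x ^ (N + N) = 0),
    qexp_eq_sum_range (add_pow_eq_zero_of_mul_eq_X_smul hxN hxyN hxxy), mul_sum, sum_mul]
  exact sum_congr rfl fun n _ => by
    rw [mul_smul_comm, smul_mul_assoc, ((semiconjBy_qexp hy h).pow_right n).eq]

theorem qexp_pentagon {x y : A} (hx : IsNilpotent x) (hy : IsNilpotent y)
    (h : y * x = q • (x * y)) : qexp y * qexp x = qexp x * qexp (x * y) * qexp y := by
  rw [(semiconjBy_qexp_qexp hx hy h).eq, qexp_add hx (isNilpotent_mul_of_mul_eq_smul h hx)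
    (by rw [mul_assoc, h, mul_smul_comm])]

theorem qexp_four_term {a b c : A} (ha : IsNilpotent a) (hb : IsNilpotent b) (hc : IsNilpotent c)
    (hab : a * b = q • (b * a)) (hbc : b * c = q • (c * b)) (hca : c * a = q • (a * c)) :
    qexp a * qexp (a * c) * qexp b * qexp c = qexp b * qexp (b * a) * qexp c * qexp a := by
  have hcb : c * b = q⁻¹ • (b * c) := by
    rw [hbc, smul_smul, inv_mul_cancel₀ RatFunc.X_ne_zero, one_smul]
  have hac_b : Commute (a * c) b := by
    rw [Commute, SemiconjBy, mul_assoc, hcb, mul_smul_comm, ← mul_assoc, hab, smul_mul_assoc,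
      smul_smul, inv_mul_cancel₀ RatFunc.X_ne_zero, one_smul, mul_assoc]
  calc qexp a * qexp (a * c) * qexp b * qexp c = qexp a * qexp b * qexp (a * c) * qexp c := by
        rw [mul_assoc (qexp a), (hac_b.qexp (isNilpotent_mul_of_mul_eq_smul hca ha) hb).eq,
          ← mul_assoc]
    _ = qexp b * qexp (b * a) * (qexp a * qexp (a * c) * qexp c) := by
        rw [qexp_pentagon hb ha hab]
        simp only [mul_assoc]
    _ = qexp b * qexp (b * a) * qexp c * qexp a := by
        rw [← qexp_pentagon ha hc hca, ← mul_assoc]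

end Algebra

section TraceEquivalence

variable {α : Type*} (eqv indep : α → α → Bool)

def eraseIndep (x : α) : List α → Option (List α)
  | [] => none
  | y :: l => if eqv y x then some l else if indep y x then (eraseIndep x l).map (y :: ·) else none

/-- A greedy test that `l'` arises from `l` by swapping adjacent entries related by `indep` and
replacing entries by `eqv`-related ones. -/
def traceEquiv : List α → List α → Bool
  | [], l' => l'.isEmpty
  | x :: l, l' =>
    match eraseIndep eqv indep x l' with
    | some r => traceEquiv l r
    | none => false

variable {eqv indep} {M : Type*} [Monoid M] {f : α → M}

theorem prod_map_eq_of_eraseIndep (heqv : ∀ x y, eqv x y → f x = f y)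
    (hindep : ∀ x y, indep x y → Commute (f x) (f y)) {x : α} {l r : List α}
    (h : eraseIndep eqv indep x l = some r) : (l.map f).prod = f x * (r.map f).prod := by
  induction l generalizing r with
  | nil => cases h
  | cons y l ih =>
    simp only [eraseIndep] at h
    split_ifs at h with hyx hyx'
    · cases h
      rw [List.map_cons, List.prod_cons, heqv y x hyx]
    · obtain ⟨r', hr', rfl⟩ := Option.map_eq_some_iff.mp h
      rw [List.map_cons, List.prod_cons, ih hr', List.map_cons, List.prod_cons, ← mul_assoc,
        ← mul_assoc, (hindep y x hyx').eq]

theorem prod_map_eq_of_traceEquiv (heqv : ∀ x y, eqv x y → f x = f y)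
    (hindep : ∀ x y, indep x y → Commute (f x) (f y)) {l l' : List α}
    (h : traceEquiv eqv indep l l') : (l.map f).prod = (l'.map f).prod := by
  induction l generalizing l' with
  | nil => simp_all [traceEquiv]
  | cons x l ih =>
    simp only [traceEquiv] at h
    split at h
    · rename_i r hr
      rw [prod_map_eq_of_eraseIndep heqv hindep hr, List.map_cons, List.prod_cons, ih h]
    · cases h

end TraceEquivalence

section QuantumTorus

variable {V : Type*} (B : V → V → ℤ)

def pairing (l l' : List V) : ℤ := (l.map fun v => (l'.map (B v)).sum).sum

def mono {M : Type*} [Monoid M] (Z : V → M) (l : List V) : M := (l.map Z).prod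

theorem mono_append {M : Type*} [Monoid M] (Z : V → M) (l l' : List V) :
    mono Z (l ++ l') = mono Z l * mono Z l' := by
  simp [mono]

variable {A : Type*} [Ring A] [Algebra (RatFunc ℚ) A]

structure IsNilpotentTorusRep (Z : V → A) : Prop where
  rel : ∀ v w, Z v * Z w = q ^ B v w • (Z w * Z v)
  isNilpotent : ∀ v, IsNilpotent (Z v)

variable {B} {Z : V → A}

theorem isNilpotentTorusRep_indicator {s : Set V}
    (hrel : ∀ v ∈ s, ∀ w ∈ s, Z v * Z w = q ^ B v w • (Z w * Z v))
    (hnil : ∀ v ∈ s, IsNilpotent (Z v)) : IsNilpotentTorusRep B (s.indicator Z) := by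
  refine ⟨fun v w => ?_, fun v => ?_⟩
  · by_cases hv : v ∈ s <;> by_cases hw : w ∈ s <;>
      simp only [Set.indicator_of_mem, Set.indicator_of_notMem, hv, hw, not_false_eq_true,
        mul_zero, zero_mul, smul_zero]
    exact hrel v hv w hw
  · by_cases hv : v ∈ s
    · exact Set.indicator_of_mem hv Z ▸ hnil v hv
    · exact Set.indicator_of_notMem hv Z ▸ IsNilpotent.zero

theorem mono_mul_mono (hrel : ∀ v w, Z v * Z w = q ^ B v w • (Z w * Z v)) (l l' : List V) :
    mono Z l * mono Z l' = q ^ pairing B l l' • (mono Z l' * mono Z l) := by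
  have letter : ∀ v, Z v * mono Z l' = q ^ (l'.map (B v)).sum • (mono Z l' * Z v) := by
    intro v
    induction l' with
    | nil => simp [mono]
    | cons w l' ih =>
      simp only [mono, List.map_cons, List.prod_cons, List.sum_cons] at ih ⊢
      rw [← mul_assoc, hrel, smul_mul_assoc, mul_assoc, ih, mul_smul_comm, smul_smul,
        ← zpow_add₀ RatFunc.X_ne_zero, mul_assoc]
  induction l with
  | nil => simp [mono, pairing]
  | cons v l ih =>
    simp only [mono, pairing, List.map_cons, List.prod_cons, List.sum_cons] at ih letter ⊢
    rw [mul_assoc, ih, mul_smul_comm, ← mul_assoc, letter, smul_mul_assoc, smul_smul,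
      ← zpow_add₀ RatFunc.X_ne_zero, add_comm, mul_assoc]

theorem IsNilpotentTorusRep.isNilpotent_mono (hZ : IsNilpotentTorusRep B Z) {l : List V}
    (hl : l ≠ []) : IsNilpotent (mono Z l) := by
  obtain ⟨v, l, rfl⟩ := List.exists_cons_of_ne_nil hl
  have hcomm := mono_mul_mono hZ.rel l [v]
  simp only [mono, List.map_cons, List.map_nil, List.prod_cons, List.prod_nil, mul_one] at hcomm
  simpa only [mono, List.map_cons, List.prod_cons] using
    isNilpotent_mul_of_mul_eq_smul hcomm (hZ.isNilpotent v)

variable (B) [DecidableEq V]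

def monoEquiv : List V → List V → Bool :=
  traceEquiv (fun v w => decide (v = w)) (fun v w => decide (B v w = 0))

def monoIndep (l l' : List V) : Bool :=
  !l.isEmpty && !l'.isEmpty && decide (pairing B l l' = 0)

def wordEquiv : List (List V) → List (List V) → Bool :=
  traceEquiv (monoEquiv B) (monoIndep B)

def isFourTermPattern (a m b c : List V) : Bool :=
  !a.isEmpty && !b.isEmpty && !c.isEmpty && monoEquiv B m (a ++ c) &&
    decide (pairing B a b = 1) && decide (pairing B b c = 1) && decide (pairing B c a = 1)

def fourTermMovesAtHead : List (List V) → List (List (List V))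
  | a :: m :: b :: c :: s =>
    if isFourTermPattern B a m b c then [b :: (b ++ a) :: c :: a :: s] else []
  | _ => []

def fourTermMoves : List (List V) → List (List (List V))
  | [] => []
  | a :: w => fourTermMovesAtHead B (a :: w) ++ (fourTermMoves w).map (a :: ·)

def fourTermStep (w w' : List (List V)) : Bool :=
  (fourTermMoves B w).any (wordEquiv B · w')

variable {B}

theorem mono_eq_of_monoEquiv (hrel : ∀ v w, Z v * Z w = q ^ B v w • (Z w * Z v))
    {l l' : List V} (h : monoEquiv B l l') : mono Z l = mono Z l' :=
  prod_map_eq_of_traceEquiv (fun v w hvw => by rw [of_decide_eq_true hvw])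
    (fun v w hvw => by rw [Commute, SemiconjBy, hrel, of_decide_eq_true hvw, zpow_zero, one_smul]) h

variable [TopologicalSpace A]

noncomputable def qexpWord (Z : V → A) (w : List (List V)) : A :=
  (w.map fun l => qexp (mono Z l)).prod

namespace IsNilpotentTorusRep

theorem qexpWord_eq_of_wordEquiv (hZ : IsNilpotentTorusRep B Z) {w w' : List (List V)}
    (h : wordEquiv B w w') : qexpWord Z w = qexpWord Z w' := by
  refine prod_map_eq_of_traceEquiv (fun l l' hl => by rw [mono_eq_of_monoEquiv hZ.rel hl]) ?_ h
  intro l l' hl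
  simp only [monoIndep, Bool.and_eq_true, Bool.not_eq_true', List.isEmpty_eq_false_iff,
    decide_eq_true_eq] at hl
  obtain ⟨⟨hl, hl'⟩, hpair⟩ := hl
  have hcomm : Commute (mono Z l) (mono Z l') := by
    rw [Commute, SemiconjBy, mono_mul_mono hZ.rel, hpair, zpow_zero, one_smul]
  exact hcomm.qexp (hZ.isNilpotent_mono hl) (hZ.isNilpotent_mono hl')

theorem qexpWord_eq_of_mem_fourTermMovesAtHead (hZ : IsNilpotentTorusRep B Z)
    {w u : List (List V)} (h : u ∈ fourTermMovesAtHead B w) : qexpWord Z w = qexpWord Z u := by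
  obtain ⟨a, m, b, c, s, rfl⟩ : ∃ a m b c s, w = a :: m :: b :: c :: s := by
    rcases w with _ | ⟨a, _ | ⟨m, _ | ⟨b, _ | ⟨c, s⟩⟩⟩⟩ <;> simp_all [fourTermMovesAtHead]
  simp only [fourTermMovesAtHead] at h
  split_ifs at h with hpat
  · rw [List.mem_singleton.mp h]
    simp only [isFourTermPattern, Bool.and_eq_true, Bool.not_eq_true', List.isEmpty_eq_false_iff,
      decide_eq_true_eq] at hpat
    obtain ⟨⟨⟨⟨⟨⟨ha, hb⟩, hc⟩, hm⟩, hab⟩, hbc⟩, hca⟩ := hpat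
    have rel : ∀ {l l' : List V}, pairing B l l' = 1 →
        mono Z l * mono Z l' = q • (mono Z l' * mono Z l) :=
      fun h => by rw [mono_mul_mono hZ.rel, h, zpow_one]
    simp only [qexpWord, List.map_cons, List.prod_cons, mono_eq_of_monoEquiv hZ.rel hm,
      mono_append, ← mul_assoc]
    rw [qexp_four_term (hZ.isNilpotent_mono ha) (hZ.isNilpotent_mono hb)
      (hZ.isNilpotent_mono hc) (rel hab) (rel hbc) (rel hca)]
  · cases h

theorem qexpWord_eq_of_mem_fourTermMoves (hZ : IsNilpotentTorusRep B Z) {w u : List (List V)}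
    (h : u ∈ fourTermMoves B w) : qexpWord Z w = qexpWord Z u := by
  induction w generalizing u with
  | nil => cases h
  | cons a w ih =>
    obtain h | h := List.mem_append.mp h
    · exact hZ.qexpWord_eq_of_mem_fourTermMovesAtHead h
    · obtain ⟨u, hu, rfl⟩ := List.mem_map.mp h
      simp only [qexpWord, List.map_cons, List.prod_cons] at ih ⊢
      rw [ih hu]

theorem qexpWord_eq_of_fourTermStep (hZ : IsNilpotentTorusRep B Z) {w w' : List (List V)}
    (h : fourTermStep B w w') : qexpWord Z w = qexpWord Z w' := by
  obtain ⟨u, hu, hequiv⟩ := List.any_eq_true.mp h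
  rw [hZ.qexpWord_eq_of_mem_fourTermMoves hu, hZ.qexpWord_eq_of_wordEquiv hequiv]

end IsNilpotentTorusRep

end QuantumTorus

theorem ten_term_cyclic_identity_general {A : Type*} [Ring A] [Algebra (RatFunc ℚ) A]
    [TopologicalSpace A] (Z : ℕ × ℕ → A)
    (hrel : ∀ v ∈ vertexSet 4, ∀ w ∈ vertexSet 4,
      Z v * Z w = ((RatFunc.X : RatFunc ℚ) ^ (Bfun v w)) • (Z w * Z v))
    (hnil : ∀ v ∈ vertexSet 4, IsNilpotent (Z v)) :
    qexp (Z (1,2)) * qexp (Z (1,2) * Z (2,3)) * qexp (Z (1,2) * Z (2,3) * Z (3,4)) *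
      qexp (Z (1,3)) * qexp (Z (1,3) * Z (2,4)) * qexp (Z (1,4)) * qexp (Z (2,3)) *
      qexp (Z (2,3) * Z (3,4)) * qexp (Z (2,4)) * qexp (Z (3,4)) =
    qexp (Z (1,4)) * qexp (Z (1,4) * Z (1,3)) * qexp (Z (1,4) * Z (1,3) * Z (1,2)) *
      qexp (Z (2,4)) * qexp (Z (2,4) * Z (2,3)) * qexp (Z (3,4)) * qexp (Z (1,3)) *
      qexp (Z (1,3) * Z (1,2)) * qexp (Z (2,3)) * qexp (Z (1,2)) := by
  -- extended by zero, `Z` satisfies the relations and nilpotency on all of `ℕ × ℕ`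
  set Z' := (vertexSet 4 : Set (ℕ × ℕ)).indicator Z
  have step : ∀ {w w'}, fourTermStep Bfun w w' → qexpWord Z' w = qexpWord Z' w' :=
    (isNilpotentTorusRep_indicator hrel hnil).qexpWord_eq_of_fourTermStep
  have key : qexpWord Z'
      [[(1,2)], [(1,2),(2,3)], [(1,2),(2,3),(3,4)], [(1,3)], [(1,3),(2,4)], [(1,4)], [(2,3)],
        [(2,3),(3,4)], [(2,4)], [(3,4)]] =
      qexpWord Z' [[(1,4)], [(1,4),(1,3)], [(1,4),(1,3),(1,2)], [(2,4)], [(2,4),(2,3)], [(3,4)],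
        [(1,3)], [(1,3),(1,2)], [(2,3)], [(1,2)]] := calc
    _ = qexpWord Z' [[(1,2)], [(1,2),(2,3)], [(1,2),(2,3),(3,4)], [(1,3)], [(1,3),(2,4)], [(1,4)],
          [(2,4)], [(3,4)], [(2,4),(2,3)], [(2,3)]] := step (by decide)
    _ = qexpWord Z' [[(1,2)], [(1,4)], [(1,2),(2,3)], [(1,2),(2,3),(3,4)], [(2,4)], [(3,4)],
          [(1,4),(1,3)], [(1,3)], [(2,4),(2,3)], [(2,3)]] := step (by decide)
    _ = qexpWord Z' [[(1,4)], [(2,4)], [(1,2)], [(1,2),(2,4),(2,3)], [(1,4),(1,3)], [(2,4),(2,3)],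
          [(3,4)], [(1,2),(2,3)], [(1,3)], [(2,3)]] := step (by decide)
    _ = qexpWord Z' [[(1,4)], [(1,4),(1,3)], [(1,4),(1,3),(1,2)], [(2,4)], [(2,4),(2,3)], [(3,4)],
          [(1,2)], [(1,2),(2,3)], [(1,3)], [(2,3)]] := step (by decide)
    _ = _ := step (by decide)
  simpa [qexpWord, mono, Z', vertexSet, mul_assoc] using key

/-- The ten-term cyclic quantum dilogarithm identity `T₄ = ρ(T₄)` for generators
`Z_{ij}` of the quantum torus `T_4` of the quiver `Q_4` (here realized by nilpotent
`q`-commuting elements of a topological algebra). -/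
theorem ten_term_cyclic_identity {A : Type*} [Ring A] [Algebra (RatFunc ℚ) A]
    [TopologicalSpace A] [T2Space A] (Z : ℕ × ℕ → A)
    (hrel : ∀ v ∈ vertexSet 4, ∀ w ∈ vertexSet 4,
      Z v * Z w = ((RatFunc.X : RatFunc ℚ) ^ (Bfun v w)) • (Z w * Z v))
    (hnil : ∀ v ∈ vertexSet 4, IsNilpotent (Z v)) :
    qexp (Z (1,2)) * qexp (Z (1,2) * Z (2,3)) * qexp (Z (1,2) * Z (2,3) * Z (3,4)) *
      qexp (Z (1,3)) * qexp (Z (1,3) * Z (2,4)) * qexp (Z (1,4)) * qexp (Z (2,3)) *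
      qexp (Z (2,3) * Z (3,4)) * qexp (Z (2,4)) * qexp (Z (3,4)) =
    qexp (Z (1,4)) * qexp (Z (1,4) * Z (1,3)) * qexp (Z (1,4) * Z (1,3) * Z (1,2)) *
      qexp (Z (2,4)) * qexp (Z (2,4) * Z (2,3)) * qexp (Z (3,4)) * qexp (Z (1,3)) *
      qexp (Z (1,3) * Z (1,2)) * qexp (Z (2,3)) * qexp (Z (1,2)) :=
  ten_term_cyclic_identity_general Z hrel hnil
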